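/- arXiv:2509.08464 — 2 statements merged into one kernel-verified Lean document; each statement's English description precedes it below -/
import Mathlib

section
/- Let M be an n×n matrix over a commutative ring, let k < n+1, let ε ∈ {+1, -1}, and let M' be the (n+1)×(n+1) matrix defined by: M'(i,j) = M(i,j) for i,j ≤ n; if ε = +1 then M'(n+1, k) = 1 and M'(n+1, j) = 0 for j ≠ k and M'(i, n+1) = 0 for all i ≤ n; if ε = -1 then M'(k, n+1) = -1 and M'(i, n+1) = 0 for i ≠ k and M'(n+1, j) = 0 for all j ≤ n. Then det(M' + I_{n+1}) = det(M + I_n). -/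
theorem stmt_6 {n : ℕ} {R : Type*} [CommRing R]
    (M : Matrix (Fin n) (Fin n) R) (M' : Matrix (Fin (n + 1)) (Fin (n + 1)) R)
    (k : Fin n) (ε : R)
    (hrestr : ∀ i j : Fin n, M' i.castSucc j.castSucc = M i j)
    (hcase :
      (ε = 1 ∧ M' (Fin.last n) k.castSucc = 1 ∧
        (∀ j : Fin (n + 1), j ≠ k.castSucc → M' (Fin.last n) j = 0) ∧
        (∀ i : Fin n, M' i.castSucc (Fin.last n) = 0)) ∨
      (ε = -1 ∧ M' k.castSucc (Fin.last n) = -1 ∧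
        (∀ i : Fin (n + 1), i ≠ k.castSucc → M' i (Fin.last n) = 0) ∧
        (∀ j : Fin n, M' (Fin.last n) j.castSucc = 0))) :
    (M' + 1).det = (M + 1).det := by
  have hlast : (Fin.last n : Fin (n+1)) ≠ k.castSucc := by
    simp [Fin.ext_iff, Fin.lt_iff_val_lt_val]
    omega
  have hcast : ∀ i : Fin n,
      (finSumFinEquiv (Sum.inl i : Fin n ⊕ Fin 1)) = i.castSucc := fun i => rfl
  have hnat : ∀ j : Fin 1,
      (finSumFinEquiv (Sum.inr j : Fin n ⊕ Fin 1)) = Fin.last n := by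
    intro j
    have : j = 0 := Subsingleton.elim _ _
    subst this
    simp [finSumFinEquiv, Fin.natAdd, Fin.last, Fin.ext_iff]
  rw [← Matrix.det_submatrix_equiv_self finSumFinEquiv (M' + 1)]
  rcases hcase with ⟨_, _, hrow, hcol⟩ | ⟨_, _, hcol, hrow⟩
  · have : (M' + 1).submatrix finSumFinEquiv finSumFinEquiv =
        Matrix.fromBlocks (M + 1)
          0
          (Matrix.of fun (i : Fin 1) (j : Fin n) => M' (Fin.last n) j.castSucc)
          1 := by
      ext i j
      cases i with
      | inl i =>
        cases j with
        | inl j =>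
          simp [Matrix.submatrix, hcast, Matrix.one_apply, hrestr, Fin.ext_iff]
        | inr j =>
          simp [Matrix.submatrix, hcast, hnat, Matrix.one_apply, hcol i,
            (Fin.castSucc_lt_last i).ne]
      | inr i =>
        cases j with
        | inl j =>
          simp [Matrix.submatrix, hcast, hnat, Matrix.one_apply, Fin.ext_iff,
            Fin.last]
        | inr j =>
          have h0 : M' (Fin.last n) (Fin.last n) = 0 := hrow _ hlast
          simp [Matrix.submatrix, hnat, Matrix.one_apply, h0,
            Subsingleton.elim i j]
    rw [this, Matrix.det_fromBlocks_zero₁₂]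
    simp
  · have : (M' + 1).submatrix finSumFinEquiv finSumFinEquiv =
        Matrix.fromBlocks (M + 1)
          (Matrix.of fun (i : Fin n) (j : Fin 1) => M' i.castSucc (Fin.last n))
          0
          1 := by
      ext i j
      cases i with
      | inl i =>
        cases j with
        | inl j =>
          simp [Matrix.submatrix, hcast, Matrix.one_apply, hrestr, Fin.ext_iff]
        | inr j =>
          simp [Matrix.submatrix, hcast, hnat, Matrix.one_apply, Fin.ext_iff,
            Fin.last]
      | inr i =>
        cases j with
        | inl j =>
          simp [Matrix.submatrix, hcast, hnat, Matrix.one_apply, hrow j,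
            (Fin.castSucc_lt_last j).ne]
        | inr j =>
          have h0 : M' (Fin.last n) (Fin.last n) = 0 := hcol _ hlast
          simp [Matrix.submatrix, hnat, Matrix.one_apply, h0,
            Subsingleton.elim i j]
    rw [this, Matrix.det_fromBlocks_zero₂₁]
    simp
end

section
/- In the group G = S_n ⋉ M_n(ℤ), where S_n acts on M_n(ℤ) by simultaneous row-column permutation, with multiplication (ρ₁, M₁)·(ρ₂, M₂) = (ρ₁ρ₂, M₁ + ρ₁(M₂)): if g = (ρ, M) and g' = h⁻¹gh for some h = (σ, N) ∈ G, r is the order of ρ, and g^r has matrix component M_r, then (g')^r = h⁻¹ g^r h has matrix component -σ⁻¹(N) + σ⁻¹(M_r) + σ⁻¹(ρ^r(N)) = σ⁻¹(M_r) (since ρ^r = id); hence the matrix components of g^r and (g')^r are similar and have the same determinant. -/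
def permMat {n : ℕ} (ρ : Equiv.Perm (Fin n))
    (M : Matrix (Fin n) (Fin n) ℤ) : Matrix (Fin n) (Fin n) ℤ :=
  fun i j => M (ρ⁻¹ i) (ρ⁻¹ j)

def pmul {n : ℕ} (x y : Equiv.Perm (Fin n) × Matrix (Fin n) (Fin n) ℤ) :
    Equiv.Perm (Fin n) × Matrix (Fin n) (Fin n) ℤ :=
  (x.1 * y.1, x.2 + permMat x.1 y.2)


def ppow {n : ℕ} (g : Equiv.Perm (Fin n) × Matrix (Fin n) (Fin n) ℤ) :
    ℕ → Equiv.Perm (Fin n) × Matrix (Fin n) (Fin n) ℤ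
  | 0 => (1, 0)
  | k + 1 => pmul g (ppow g k)

def pinv {n : ℕ} (h : Equiv.Perm (Fin n) × Matrix (Fin n) (Fin n) ℤ) :
    Equiv.Perm (Fin n) × Matrix (Fin n) (Fin n) ℤ :=
  (h.1⁻¹, -permMat h.1⁻¹ h.2)

lemma permMat_one {n : ℕ} (M : Matrix (Fin n) (Fin n) ℤ) : permMat 1 M = M := rfl

lemma permMat_mul {n : ℕ} (ρ σ : Equiv.Perm (Fin n)) (M : Matrix (Fin n) (Fin n) ℤ) :
    permMat (ρ * σ) M = permMat ρ (permMat σ M) := by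
  funext i j; simp [permMat, Equiv.Perm.mul_apply]

lemma permMat_add {n : ℕ} (ρ : Equiv.Perm (Fin n)) (M N : Matrix (Fin n) (Fin n) ℤ) :
    permMat ρ (M + N) = permMat ρ M + permMat ρ N := rfl

lemma permMat_neg {n : ℕ} (ρ : Equiv.Perm (Fin n)) (M : Matrix (Fin n) (Fin n) ℤ) :
    permMat ρ (-M) = -(permMat ρ M) := rfl

lemma permMat_zero {n : ℕ} (ρ : Equiv.Perm (Fin n)) : permMat ρ (0 : Matrix (Fin n) (Fin n) ℤ) = 0 := rfl

lemma pmul_assoc {n : ℕ} (x y z : Equiv.Perm (Fin n) × Matrix (Fin n) (Fin n) ℤ) :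
    pmul (pmul x y) z = pmul x (pmul y z) := by
  simp [pmul, permMat_mul, permMat_add, mul_assoc, add_assoc]

lemma pmul_one {n : ℕ} (x : Equiv.Perm (Fin n) × Matrix (Fin n) (Fin n) ℤ) :
    pmul x (1, 0) = x := by
  simp [pmul, permMat_zero]

lemma one_pmul {n : ℕ} (x : Equiv.Perm (Fin n) × Matrix (Fin n) (Fin n) ℤ) :
    pmul (1, 0) x = x := by
  simp [pmul, permMat_one]

lemma pmul_pinv {n : ℕ} (h : Equiv.Perm (Fin n) × Matrix (Fin n) (Fin n) ℤ) :
    pmul h (pinv h) = (1, 0) := by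
  simp [pmul, pinv, permMat_neg, ← permMat_mul, permMat_one]

lemma ppow_fst {n : ℕ} (g : Equiv.Perm (Fin n) × Matrix (Fin n) (Fin n) ℤ) (k : ℕ) :
    (ppow g k).1 = g.1 ^ k := by
  induction k with
  | zero => rfl
  | succ k ih => simp [ppow, pmul, ih, pow_succ']

lemma ppow_conj {n : ℕ} (g h : Equiv.Perm (Fin n) × Matrix (Fin n) (Fin n) ℤ) (k : ℕ) :
    ppow (pmul (pmul (pinv h) g) h) k = pmul (pmul (pinv h) (ppow g k)) h := by
  induction k with
  | zero =>
    show (1, 0) = pmul (pmul (pinv h) (1, 0)) h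
    rw [pmul_one]
    simp [pinv, pmul, ← permMat_mul, permMat_neg, permMat_one]
  | succ k ih =>
    show pmul (pmul (pmul (pinv h) g) h) (ppow _ k) = _
    rw [ih, ppow]
    have : pmul h (pmul (pmul (pinv h) (ppow g k)) h)
        = pmul (pmul (pmul h (pinv h)) (ppow g k)) h := by
      simp [pmul_assoc]
    rw [pmul_assoc, this, pmul_pinv, one_pmul, ← pmul_assoc, ← pmul_assoc]

theorem stmt_10 {n : ℕ} (g h : Equiv.Perm (Fin n) × Matrix (Fin n) (Fin n) ℤ)
    (g' : Equiv.Perm (Fin n) × Matrix (Fin n) (Fin n) ℤ)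
    (hg' : g' = pmul (pmul (pinv h) g) h) (r : ℕ) (hr : r = orderOf g.1) :
    (ppow g' r).2 = permMat h.1⁻¹ (ppow g r).2 ∧
    (∃ Q : (Matrix (Fin n) (Fin n) ℤ)ˣ,
      (ppow g' r).2 = (↑Q⁻¹ : Matrix (Fin n) (Fin n) ℤ) * (ppow g r).2 * (↑Q : Matrix (Fin n) (Fin n) ℤ)) ∧
    (ppow g' r).2.det = (ppow g r).2.det := by
  have hpow : g.1 ^ r = 1 := by rw [hr]; exact pow_orderOf_eq_one g.1
  have hfst : (ppow g r).1 = 1 := by rw [ppow_fst, hpow]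
  have key : (ppow g' r).2 = permMat h.1⁻¹ (ppow g r).2 := by
    rw [hg', ppow_conj]
    simp only [pmul, pinv, hfst, mul_one, permMat_add, permMat_neg, ← permMat_mul,
      inv_mul_cancel, permMat_one]
    abel
  refine ⟨key, ?_, ?_⟩
  · set σ := h.1 with hσ
    refine ⟨⟨(σ⁻¹).toPEquiv.toMatrix, σ.toPEquiv.toMatrix, ?_, ?_⟩, ?_⟩
    · rw [← PEquiv.toMatrix_trans, ← Equiv.toPEquiv_trans]
      simp [(show σ⁻¹.trans σ = Equiv.refl (Fin n) by ext x; simp),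
        Equiv.toPEquiv_refl, PEquiv.toMatrix_refl]
    · rw [← PEquiv.toMatrix_trans, ← Equiv.toPEquiv_trans]
      simp [(show σ.trans σ⁻¹ = Equiv.refl (Fin n) by ext x; simp),
        Equiv.toPEquiv_refl, PEquiv.toMatrix_refl]
    · rw [key]
      show permMat σ⁻¹ (ppow g r).2
        = σ.toPEquiv.toMatrix * (ppow g r).2 * (σ⁻¹).toPEquiv.toMatrix
      rw [PEquiv.toMatrix_toPEquiv_mul, PEquiv.mul_toMatrix_toPEquiv]
      funext i j
      simp [permMat, Matrix.submatrix, Equiv.Perm.inv_def]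
  · rw [key]
    have : permMat h.1⁻¹ (ppow g r).2 = (ppow g r).2.submatrix h.1 h.1 := by
      funext i j; simp [permMat, Matrix.submatrix]
    rw [this, Matrix.det_submatrix_equiv_self]
end
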